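/- Let C be a polygonal curve with vertices p_0, …, p_m and L(C) > 0, and suppose L(f(C)) = L(C). Then every vertex of C lies on the respaced curve: for each k ∈ {0, …, m} there exist j ∈ {0, …, m−1} and t ∈ [0,1] such that p_k = (1−t)·f(p_j) + t·f(p_{j+1}). -/
import Mathlib


open Finset Filter

noncomputable section

/-- The length of the polygonal curve with vertices `p 0, …, p m`
(also the arclength distance from `p 0` to `p m` along the curve). -/
def polyLength {dim : ℕ} (p : ℕ → EuclideanSpace ℝ (Fin dim)) (m : ℕ) : ℝ :=
  ∑ i ∈ Finset.range m, ‖p (i + 1) - p i‖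

/-- `P` is the arclength-parameterized linear interpolation of the polygonal
curve with vertices `p 0, …, p m`:
`P ((1-t)·d_{k-1} + t·d_k) = (1-t)·p_{k-1} + t·p_k` for `t ∈ [0,1]`, `k = 1, …, m`,
where `d_k = polyLength p k` is the arclength up to vertex `k`. -/
def IsArcParam {dim : ℕ} (p : ℕ → EuclideanSpace ℝ (Fin dim)) (m : ℕ)
    (P : ℝ → EuclideanSpace ℝ (Fin dim)) : Prop :=
  ∀ k : ℕ, 1 ≤ k → k ≤ m → ∀ t : ℝ, 0 ≤ t → t ≤ 1 →
    P ((1 - t) * polyLength p (k - 1) + t * polyLength p k)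
      = (1 - t) • p (k - 1) + t • p k

/-- The polygonal curve with vertices `p 0, …, p m` is equilateral:
all consecutive interpoint distances agree. -/
def IsEquilateral {dim : ℕ} (p : ℕ → EuclideanSpace ℝ (Fin dim)) (m : ℕ) : Prop :=
  ∀ k l : ℕ, 1 ≤ k → k ≤ m → 1 ≤ l → l ≤ m →
    ‖p k - p (k - 1)‖ = ‖p l - p (l - 1)‖

/-- `q 0, …, q m` are the vertices of the arclength respacing `f(C)` of the
polygonal curve `C` with vertices `p 0, …, p m`:
`q k = P (k·L(C)/m)` where `P` is the arclength parameterization of `C`;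
by convention `f(C) := C` when `L(C) = 0`. -/
def Respaces {dim : ℕ} (m : ℕ) (p q : ℕ → EuclideanSpace ℝ (Fin dim)) : Prop :=
  (polyLength p m = 0 ∧ ∀ k ≤ m, q k = p k) ∨
  (0 < polyLength p m ∧ ∃ P : ℝ → EuclideanSpace ℝ (Fin dim), IsArcParam p m P ∧
    ∀ k ≤ m, q k = P ((k : ℝ) * polyLength p m / m))

lemma polyLength_sub {dim : ℕ} (p : ℕ → EuclideanSpace ℝ (Fin dim)) {k l : ℕ} (h : k ≤ l) :
    polyLength p l - polyLength p k = ∑ i ∈ Finset.Ico k l, ‖p (i + 1) - p i‖ := by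
  rw [Finset.sum_Ico_eq_sub _ h]; rfl

lemma polyLength_mono {dim : ℕ} (p : ℕ → EuclideanSpace ℝ (Fin dim)) {k l : ℕ} (h : k ≤ l) :
    polyLength p k ≤ polyLength p l := by
  have := polyLength_sub p h
  have h2 : 0 ≤ ∑ i ∈ Finset.Ico k l, ‖p (i + 1) - p i‖ :=
    Finset.sum_nonneg fun i _ => norm_nonneg _
  linarith

lemma polyLength_succ {dim : ℕ} (p : ℕ → EuclideanSpace ℝ (Fin dim)) (j : ℕ) :
    polyLength p (j + 1) = polyLength p j + ‖p (j + 1) - p j‖ :=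
  Finset.sum_range_succ _ j

lemma norm_sub_le_polyLength {dim : ℕ} (p : ℕ → EuclideanSpace ℝ (Fin dim)) {k l : ℕ}
    (h : k ≤ l) : ‖p l - p k‖ ≤ polyLength p l - polyLength p k := by
  rw [polyLength_sub p h]
  have : p l - p k = ∑ i ∈ Finset.Ico k l, (p (i + 1) - p i) := by
    rw [Finset.sum_Ico_eq_sub _ h, Finset.sum_range_sub, Finset.sum_range_sub]
    abel
  rw [this]
  exact norm_sum_le _ _

/-- Edge parameterization. -/
lemma edge_param {dim m : ℕ} {p : ℕ → EuclideanSpace ℝ (Fin dim)}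
    {P : ℝ → EuclideanSpace ℝ (Fin dim)} (hP : IsArcParam p m P) {j : ℕ} (hj : j + 1 ≤ m)
    {x : ℝ} (hx1 : polyLength p j ≤ x) (hx2 : x ≤ polyLength p (j + 1)) :
    ∃ t : ℝ, 0 ≤ t ∧ t ≤ 1 ∧ P x = (1 - t) • p j + t • p (j + 1) ∧
      t * ‖p (j + 1) - p j‖ = x - polyLength p j := by
  have hD := polyLength_succ p j
  have hPs : ∀ t : ℝ, 0 ≤ t → t ≤ 1 →
      P ((1 - t) * polyLength p j + t * polyLength p (j + 1))
        = (1 - t) • p j + t • p (j + 1) := by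
    intro t ht0 ht1
    have := hP (j + 1) (Nat.le_add_left 1 j) hj t ht0 ht1
    simpa using this
  rcases eq_or_lt_of_le (norm_nonneg (p (j + 1) - p j)) with h0 | h0
  · -- zero-length edge
    have hx : x = polyLength p j := by
      rw [hD, ← h0] at hx2; linarith
    refine ⟨0, le_refl _, zero_le_one, ?_, by rw [hx]; ring⟩
    have := hPs 0 le_rfl zero_le_one
    simpa [hx] using this
  · set e := ‖p (j + 1) - p j‖ with he
    have hnum : 0 ≤ x - polyLength p j := by linarith
    have ht0 : 0 ≤ (x - polyLength p j) / e := div_nonneg hnum h0.le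
    have ht1 : (x - polyLength p j) / e ≤ 1 := by
      rw [div_le_one h0]; rw [hD] at hx2; linarith
    refine ⟨(x - polyLength p j) / e, ht0, ht1, ?_, ?_⟩
    · have harg : (1 - (x - polyLength p j) / e) * polyLength p j
          + (x - polyLength p j) / e * polyLength p (j + 1) = x := by
        rw [hD]; field_simp; ring
      have := hPs ((x - polyLength p j) / e) ht0 ht1
      rwa [harg] at this
    · field_simp

/-- Every point of `[0, polyLength p n]` lies in some edge interval. -/
lemma exists_edge {dim : ℕ} (p : ℕ → EuclideanSpace ℝ (Fin dim)) :
    ∀ n : ℕ, 1 ≤ n → ∀ x : ℝ, 0 ≤ x → x ≤ polyLength p n →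
      ∃ j, j < n ∧ polyLength p j ≤ x ∧ x ≤ polyLength p (j + 1) := by
  intro n
  induction n with
  | zero => intro h; exact absurd h (by norm_num)
  | succ n ih =>
    intro _ x hx0 hxn
    by_cases hxle : x ≤ polyLength p n
    · rcases Nat.eq_zero_or_pos n with rfl | hn
      · refine ⟨0, Nat.zero_lt_one, ?_, hxn⟩
        simpa [polyLength] using hx0
      · obtain ⟨j, hj, h1, h2⟩ := ih hn x hx0 hxle
        exact ⟨j, Nat.lt_succ_of_lt hj, h1, h2⟩
    · exact ⟨n, Nat.lt_succ_self n, le_of_not_ge hxle, hxn⟩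

/-- The arclength parameterization is 1-Lipschitz. -/
lemma arcParam_lipschitz {dim m : ℕ} (hm : 1 ≤ m) {p : ℕ → EuclideanSpace ℝ (Fin dim)}
    {P : ℝ → EuclideanSpace ℝ (Fin dim)} (hP : IsArcParam p m P) {x y : ℝ}
    (hx0 : 0 ≤ x) (hxy : x ≤ y) (hy : y ≤ polyLength p m) :
    ‖P y - P x‖ ≤ y - x := by
  obtain ⟨j, hj, hj1, hj2⟩ := exists_edge p m hm x hx0 (hxy.trans hy)
  obtain ⟨l, hl, hl1, hl2⟩ := exists_edge p m hm y (hx0.trans hxy) hy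
  obtain ⟨s, hs0, hs1, hPx, hse⟩ := edge_param hP hj hj1 hj2
  obtain ⟨t, ht0, ht1, hPy, hte⟩ := edge_param hP hl hl1 hl2
  rcases lt_trichotomy j l with hjl | hjl | hjl
  · -- j < l : chain through p (j+1) and p l
    have hj1l : j + 1 ≤ l := hjl
    have h1 : ‖P y - p l‖ = y - polyLength p l := by
      have : P y - p l = t • (p (l + 1) - p l) := by
        rw [hPy]; module
      rw [this, norm_smul, Real.norm_eq_abs, abs_of_nonneg ht0, hte]
    have h2 : ‖p (j + 1) - P x‖ = polyLength p (j + 1) - x := by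
      have : p (j + 1) - P x = (1 - s) • (p (j + 1) - p j) := by
        rw [hPx]; module
      rw [this, norm_smul, Real.norm_eq_abs, abs_of_nonneg (by linarith), sub_mul,
        one_mul, hse]
      have := polyLength_succ p j
      linarith
    have h3 : ‖p l - p (j + 1)‖ ≤ polyLength p l - polyLength p (j + 1) :=
      norm_sub_le_polyLength p hj1l
    have hmid := polyLength_mono p hj1l
    calc ‖P y - P x‖ ≤ ‖P y - p l‖ + ‖p l - P x‖ := norm_sub_le_norm_sub_add_norm_sub _ _ _
      _ ≤ ‖P y - p l‖ + (‖p l - p (j + 1)‖ + ‖p (j + 1) - P x‖) := by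
          have := norm_sub_le_norm_sub_add_norm_sub (p l) (p (j+1)) (P x)
          linarith
      _ ≤ y - x := by rw [h1, h2]; linarith
  · -- same edge
    subst hjl
    have hEq : P y - P x = (t - s) • (p (j + 1) - p j) := by
      rw [hPy, hPx]; module
    have hts : (t - s) * ‖p (j + 1) - p j‖ = y - x := by
      have : t * ‖p (j+1) - p j‖ - s * ‖p (j+1) - p j‖ = y - x := by
        rw [hte, hse]; ring
      linarith [this]
    apply le_of_eq
    calc ‖P y - P x‖ = |t - s| * ‖p (j + 1) - p j‖ := by
          rw [hEq, norm_smul, Real.norm_eq_abs]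
      _ = |(t - s) * ‖p (j + 1) - p j‖| := by
          rw [abs_mul, abs_of_nonneg (norm_nonneg _)]
      _ = |y - x| := by rw [hts]
      _ = y - x := abs_of_nonneg (by linarith)
  · -- l < j : degenerate, x = y
    have : polyLength p (l + 1) ≤ polyLength p j := polyLength_mono p hjl
    have hxy' : x = y := le_antisymm hxy (by linarith)
    simp [hxy']

/-- If `L(f(C)) = L(C)` then every vertex of `C` lies on the respaced curve. -/
theorem stmt4 {dim m : ℕ} (hm : 1 ≤ m) (p : ℕ → EuclideanSpace ℝ (Fin dim))
    (hL : 0 < polyLength p m)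
    (P : ℝ → EuclideanSpace ℝ (Fin dim)) (hP : IsArcParam p m P)
    (q : ℕ → EuclideanSpace ℝ (Fin dim))
    (hq : ∀ k ≤ m, q k = P ((k : ℝ) * polyLength p m / m))
    (hLeq : polyLength q m = polyLength p m) :
    ∀ k ≤ m, ∃ j < m, ∃ t : ℝ, 0 ≤ t ∧ t ≤ 1 ∧
      p k = (1 - t) • q j + t • q (j + 1) := by
  have hm0 : (0 : ℝ) < (m : ℝ) := by exact_mod_cast hm
  set L := polyLength p m with hLdef
  have hLm : 0 ≤ L / m := by positivity
  have hgridle : ∀ j : ℕ, j ≤ m → (j : ℝ) * L / m ≤ L := by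
    intro j hj
    rw [div_le_iff₀ hm0]
    have : (j : ℝ) ≤ (m : ℝ) := by exact_mod_cast hj
    nlinarith [hL.le]
  -- each respaced edge has length at most L/m
  have hedge : ∀ j, j < m → ‖q (j + 1) - q j‖ ≤ L / m := by
    intro j hj
    have hj1 : j + 1 ≤ m := hj
    rw [hq (j + 1) hj1, hq j (Nat.le_of_lt hj)]
    have hdiff : ((j + 1 : ℕ) : ℝ) * L / m - (j : ℝ) * L / m = L / m := by
      push_cast; ring
    have hx0 : 0 ≤ (j : ℝ) * L / m := by positivity
    have hxy : (j : ℝ) * L / m ≤ ((j + 1 : ℕ) : ℝ) * L / m := by linarith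
    have hy : ((j + 1 : ℕ) : ℝ) * L / m ≤ L := hgridle _ hj1
    have := arcParam_lipschitz hm hP hx0 hxy hy
    linarith
  -- equality of lengths forces each respaced edge to be exactly L/m
  have hsum : ∑ i ∈ Finset.range m, ‖q (i + 1) - q i‖
      = ∑ i ∈ Finset.range m, L / m := by
    rw [Finset.sum_const, Finset.card_range, nsmul_eq_mul]
    show polyLength q m = (m : ℝ) * (L / m)
    rw [hLeq]
    field_simp
  have heach : ∀ i ∈ Finset.range m, ‖q (i + 1) - q i‖ = L / m :=
    (Finset.sum_eq_sum_iff_of_le fun i hi =>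
      hedge i (Finset.mem_range.mp hi)).mp hsum
  -- cumulative lengths of q are on the uniform grid
  have hqLen : ∀ j, j ≤ m → polyLength q j = (j : ℝ) * L / m := by
    intro j hj
    have : polyLength q j = ∑ i ∈ Finset.range j, L / m := by
      apply Finset.sum_congr rfl
      intro i hi
      exact heach i (Finset.mem_range.mpr (lt_of_lt_of_le (Finset.mem_range.mp hi) hj))
    rw [this, Finset.sum_const, Finset.card_range, nsmul_eq_mul]
    ring
  -- vertices of p are values of P at cumulative lengths
  have hPk : ∀ k, k ≤ m → P (polyLength p k) = p k := by
    intro k hk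
    rcases Nat.eq_zero_or_pos k with rfl | hk1
    · have := hP 1 le_rfl hm 0 le_rfl zero_le_one
      simpa using this
    · obtain ⟨j, rfl⟩ := Nat.exists_eq_add_of_le hk1
      have := hP (1 + j) (Nat.le_add_right 1 j) hk 1 zero_le_one le_rfl
      simpa using this
  -- main argument
  intro k hk
  set c := polyLength p k with hc
  have hc0 : 0 ≤ c := by
    have : polyLength p 0 ≤ c := polyLength_mono p (Nat.zero_le k)
    simpa [polyLength] using this
  have hcL : c ≤ L := polyLength_mono p hk
  -- find the grid interval containing c
  obtain ⟨j, hj, hj1, hj2⟩ := exists_edge q m hm c hc0 (by rw [hLeq]; exact hcL)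
  rw [hqLen j (Nat.le_of_lt hj)] at hj1
  rw [hqLen (j + 1) hj] at hj2
  have hj1m : j + 1 ≤ m := hj
  -- distances
  have hd1 : dist (q j) (p k) ≤ c - (j : ℝ) * L / m := by
    rw [dist_eq_norm, hq j (Nat.le_of_lt hj), ← hPk k hk, norm_sub_rev]
    exact arcParam_lipschitz hm hP (by positivity) hj1 hcL
  have hd2 : dist (p k) (q (j + 1)) ≤ ((j + 1 : ℕ) : ℝ) * L / m - c := by
    rw [dist_eq_norm, hq (j + 1) hj1m, ← hPk k hk, norm_sub_rev]
    exact arcParam_lipschitz hm hP hc0 hj2 (hgridle _ hj1m)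
  have hd3 : dist (q j) (q (j + 1)) = L / m := by
    rw [dist_eq_norm, norm_sub_rev]
    exact heach j (Finset.mem_range.mpr hj)
  have hdiff : ((j + 1 : ℕ) : ℝ) * L / m - (j : ℝ) * L / m = L / m := by
    push_cast; ring
  have htri : dist (q j) (p k) + dist (p k) (q (j + 1)) = dist (q j) (q (j + 1)) := by
    have h1 := dist_triangle (q j) (p k) (q (j + 1))
    have h2 : dist (q j) (p k) + dist (p k) (q (j + 1)) ≤ L / m := by linarith
    linarith [h2, hd3, h1]
  have hwbtw : Wbtw ℝ (q j) (p k) (q (j + 1)) := dist_add_dist_eq_iff.mp htri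
  have hseg : p k ∈ segment ℝ (q j) (q (j + 1)) :=
    mem_segment_iff_wbtw.mpr hwbtw
  obtain ⟨a, b, ha, hb, hab, habeq⟩ := hseg
  refine ⟨j, hj, b, hb, by linarith, ?_⟩
  rw [show (1 : ℝ) - b = a by linarith]
  exact habeq.symm
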